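/- There exists an absolute constant C₂ > 0 such that for every ω ∈ (L¹ ∩ L²)(ℝ²₊) with ‖x₂ω‖₁ < ∞ and every x ∈ ℝ²₊, |∫_{ℝ²₊} G(x,y)ω(y) dy| ≤ C₂·( ‖ω‖₁^{1/3}·‖ω‖₂^{1/3}·‖x₂ω‖₁^{1/3} + ‖ω‖₂^{1/2}·‖x₂ω‖₁^{1/2} ). -/

import Mathlib

open MeasureTheory Real Set NNReal Filter Topology

noncomputable section

/-- The upper half plane `ℝ²₊`. -/
def H : Set (ℝ × ℝ) := {p | 0 < p.2}

/-- The half-plane Green function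
`G(x,y) = (1/(4π)) log(1 + 4 x₂ y₂ / |x-y|²)` (Euclidean distance). -/
def G (x y : ℝ × ℝ) : ℝ :=
  (1 / (4 * π)) * Real.log (1 + 4 * x.2 * y.2 / ((x.1 - y.1) ^ 2 + (x.2 - y.2) ^ 2))

/-- The potential `𝒢[ω](x) = ∫_{ℝ²₊} G(x,y) ω(y) dy`. -/
def Gpot (ω : ℝ × ℝ → ℝ) (x : ℝ × ℝ) : ℝ := ∫ y in H, G x y * ω y

/-- The kinetic energy `E(ω) = (1/2) ∫∫ G(x,y) ω(x) ω(y) dy dx`. -/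
def energy (ω : ℝ × ℝ → ℝ) : ℝ :=
  (1 / 2) * ∫ x in H, ∫ y in H, G x y * ω x * ω y

/-- The `L¹(ℝ²₊)` norm (mass). -/
def norm1 (ω : ℝ × ℝ → ℝ) : ℝ := ∫ x in H, |ω x|

/-- The `L²(ℝ²₊)` norm. -/
def norm2 (ω : ℝ × ℝ → ℝ) : ℝ := (∫ x in H, ω x ^ 2) ^ ((1 : ℝ) / 2)

/-- The impulse `‖x₂ ω‖₁ = ∫_{ℝ²₊} x₂ |ω(x)| dx`. -/
def impulse (ω : ℝ × ℝ → ℝ) : ℝ := ∫ x in H, x.2 * |ω x|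

/-- `ω ∈ (L¹ ∩ L²)(ℝ²₊)`. -/
def MemL1L2 (ω : ℝ × ℝ → ℝ) : Prop :=
  Integrable ω (volume.restrict H) ∧ Integrable (fun x => ω x ^ 2) (volume.restrict H)

/-- Finiteness of the impulse `‖x₂ ω‖₁ < ∞`. -/
def ImpulseFinite (ω : ℝ × ℝ → ℝ) : Prop :=
  Integrable (fun x : ℝ × ℝ => x.2 * |ω x|) (volume.restrict H)

/-- The admissible class `K_M`: patches `ω = 1_A` a.e. on `ℝ²₊` with
impulse `∫_A x₂ = M` and mass `|A| ≤ 1`. -/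
def memK (M : ℝ) (ω : ℝ × ℝ → ℝ) : Prop :=
  Integrable ω (volume.restrict H) ∧
  ∃ A : Set (ℝ × ℝ), A ⊆ H ∧ MeasurableSet A ∧
    (∀ᵐ x ∂volume.restrict H, ω x = A.indicator (fun _ => (1 : ℝ)) x) ∧
    (∫ x in A, x.2) = M ∧ volume A ≤ 1

/-- The admissible class `K_{M,∞}`: patches `ω = 1_A` a.e. on `ℝ²₊` with
impulse `∫_A x₂ = M`, without any mass bound. -/
def memKinf (M : ℝ) (ω : ℝ × ℝ → ℝ) : Prop :=
  Integrable ω (volume.restrict H) ∧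
  ∃ A : Set (ℝ × ℝ), A ⊆ H ∧ MeasurableSet A ∧
    (∀ᵐ x ∂volume.restrict H, ω x = A.indicator (fun _ => (1 : ℝ)) x) ∧
    (∫ x in A, x.2) = M

/-- The relaxed admissible class `K̃_M`: measurable `0 ≤ ω ≤ 1` with
mass `≤ 1` and impulse `≤ M`. -/
def memKt (M : ℝ) (ω : ℝ × ℝ → ℝ) : Prop :=
  Integrable ω (volume.restrict H) ∧
  (∀ᵐ x ∂volume.restrict H, 0 ≤ ω x ∧ ω x ≤ 1) ∧
  norm1 ω ≤ 1 ∧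
  Integrable (fun x : ℝ × ℝ => x.2 * |ω x|) (volume.restrict H) ∧
  impulse ω ≤ M

/-- The set of maximizers `S_M` of the energy over `K_M`. -/
def memS (M : ℝ) (ω : ℝ × ℝ → ℝ) : Prop :=
  memK M ω ∧ ∀ ω' : ℝ × ℝ → ℝ, memK M ω' → energy ω' ≤ energy ω

/-- The maximal energy `I_M` over `K_M`. -/
def Isup (M : ℝ) : ℝ := sSup (energy '' {ω | memK M ω})

/-- The maximal energy `I_{1,∞}` over `K_{1,∞}`. -/
def IsupInf : ℝ := sSup (energy '' {ω | memKinf 1 ω})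

/-- The Steiner symmetry condition for a set `Ω ⊆ ℝ²₊`. -/
def SteinerSet (Ω : Set (ℝ × ℝ)) : Prop :=
  (∀ x₁ x₂ : ℝ, 0 < x₂ → (((x₁, x₂) : ℝ × ℝ) ∈ Ω ↔ ((-x₁, x₂) : ℝ × ℝ) ∈ Ω)) ∧
  (∀ x₂ : ℝ, 0 < x₂ → ∀ a b : ℝ, 0 ≤ a → a ≤ b →
    ((b, x₂) : ℝ × ℝ) ∈ Ω → ((a, x₂) : ℝ × ℝ) ∈ Ω)

/-- The Steiner symmetry condition for a nonnegative function on `ℝ²₊`. -/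
def SteinerFn (f : ℝ × ℝ → ℝ) : Prop :=
  (∀ x₁ x₂ : ℝ, 0 < x₂ → f (x₁, x₂) = f (-x₁, x₂)) ∧
  (∀ x₂ : ℝ, 0 < x₂ → ∀ a b : ℝ, 0 ≤ a → a ≤ b → f (b, x₂) ≤ f (a, x₂))




lemma polar_transfer (g : ℝ × ℝ → ℝ)
    (h : IntegrableOn (fun p : ℝ × ℝ => p.1 • g (polarCoord.symm p)) polarCoord.target) :
    Integrable g := by
  set B : ℝ × ℝ → ℝ × ℝ →L[ℝ] ℝ × ℝ := fun p =>
    LinearMap.toContinuousLinearMap (Matrix.toLin (Module.Basis.finTwoProd ℝ) (Module.Basis.finTwoProd ℝ)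
      !![cos p.2, -p.1 * sin p.2; sin p.2, p.1 * cos p.2])
  have A : ∀ p ∈ polarCoord.target, HasFDerivWithinAt polarCoord.symm (B p) polarCoord.target p :=
    fun p _ => (hasFDerivAt_polarCoord_symm p).hasFDerivWithinAt
  have B_det : ∀ p, (B p).det = p.1 := by
    intro p
    conv_rhs => rw [← one_mul p.1, ← cos_sq_add_sin_sq p.2]
    simp only [B, neg_mul, LinearMap.det_toContinuousLinearMap, LinearMap.det_toLin,
      Matrix.det_fin_two_of, sub_neg_eq_add]
    ring
  have hinj : InjOn polarCoord.symm polarCoord.target := by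
    have := polarCoord.symm.injOn
    simpa using this
  have key := (integrableOn_image_iff_integrableOn_abs_det_fderiv_smul volume
    polarCoord.open_target.measurableSet A hinj g)
  have himg : polarCoord.symm '' polarCoord.target = polarCoord.source :=
    polarCoord.symm_image_target_eq_source
  rw [himg] at key
  have hsrc : IntegrableOn g polarCoord.source := by
    rw [key]
    apply h.congr_fun ?_ polarCoord.open_target.measurableSet
    intro p hp
    simp only
    rw [B_det, abs_of_pos hp.1]
  have : IntegrableOn g univ := by
    rwa [IntegrableOn, Measure.restrict_congr_set polarCoord_source_ae_eq_univ.symm]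
  simpa using this

lemma ball_inv_spec {δ : ℝ} (hδ : 0 < δ) :
    Integrable (fun z : ℝ × ℝ => if z.1^2+z.2^2 < δ^2 then δ / Real.sqrt (z.1^2+z.2^2) else 0) ∧
    ∫ z : ℝ × ℝ, (if z.1^2+z.2^2 < δ^2 then δ / Real.sqrt (z.1^2+z.2^2) else 0)
      = 2*π*δ^2 := by
  set g : ℝ × ℝ → ℝ :=
    fun z => if z.1^2+z.2^2 < δ^2 then δ / Real.sqrt (z.1^2+z.2^2) else 0 with hg
  set S : Set (ℝ × ℝ) := Ioo (0:ℝ) δ ×ˢ Ioo (-π) π with hS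
  have hprod : ∀ p ∈ polarCoord.target,
      p.1 • g (polarCoord.symm p) = S.indicator (fun _ => δ) p := by
    rintro ⟨r, θ⟩ ⟨hr, hθ⟩
    simp only [polarCoord_symm_apply, hg] at *
    have h1 : (r * cos θ)^2 + (r * sin θ)^2 = r^2 := by
      have := sin_sq_add_cos_sq θ; nlinarith
    rw [h1]
    have hr' : (0:ℝ) < r := hr
    have h2 : (r^2 < δ^2) ↔ r < δ := by
      constructor <;> intro h <;> nlinarith
    have h3 : Real.sqrt (r^2) = r := Real.sqrt_sq hr'.le
    by_cases hcase : r < δ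
    · rw [if_pos (h2.mpr hcase), h3]
      have : ((r,θ) : ℝ × ℝ) ∈ S := ⟨⟨hr', hcase⟩, hθ⟩
      rw [Set.indicator_of_mem this]
      rw [smul_eq_mul]
      field_simp
    · rw [if_neg (by rw [h2]; exact hcase)]
      have : ((r,θ) : ℝ × ℝ) ∉ S := fun hmem => hcase hmem.1.2
      rw [Set.indicator_of_notMem this]
      simp
  have hSmeas : MeasurableSet S := measurableSet_Ioo.prod measurableSet_Ioo
  have hSvol : volume S = ENNReal.ofReal δ * ENNReal.ofReal (2*π) := by
    rw [hS, Measure.volume_eq_prod, Measure.prod_prod, Real.volume_Ioo, Real.volume_Ioo]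
    congr 1
    · simp
    · rw [show π - (-π) = 2*π by ring]
  have hind : Integrable (S.indicator (fun _ => (δ:ℝ))) := by
    rw [integrable_indicator_iff hSmeas]
    refine (integrableOn_const_iff).mpr (Or.inr ?_)
    rw [hSvol]
    exact ENNReal.mul_lt_top ENNReal.ofReal_lt_top ENNReal.ofReal_lt_top
  have hIOn : IntegrableOn (fun p : ℝ × ℝ => p.1 • g (polarCoord.symm p)) polarCoord.target := by
    apply (hind.integrableOn).congr_fun ?_ polarCoord.open_target.measurableSet
    intro p hp; exact (hprod p hp).symm
  have hInt : Integrable g := polar_transfer g hIOn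
  refine ⟨hInt, ?_⟩
  rw [← integral_comp_polarCoord_symm g]
  rw [setIntegral_congr_fun polarCoord.open_target.measurableSet hprod]
  have hSsub : S ⊆ polarCoord.target := by
    rintro ⟨r, θ⟩ ⟨hr, hθ⟩
    exact ⟨hr.1, hθ⟩
  rw [setIntegral_indicator hSmeas]
  rw [inter_eq_self_of_subset_right hSsub, setIntegral_const, measureReal_def, hSvol, smul_eq_mul,
    ENNReal.toReal_mul, ENNReal.toReal_ofReal hδ.le,
    ENNReal.toReal_ofReal (by positivity : (0:ℝ) ≤ 2*π)]
  ring

lemma log_le' {t : ℝ} (ht : 0 ≤ t) : Real.log (1+t) ≤ t := by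
  have := Real.log_le_sub_one_of_pos (show (0:ℝ) < 1+t by linarith)
  linarith

lemma log_le_two_sqrt {t : ℝ} (ht : 0 ≤ t) : Real.log (1+t) ≤ 2 * Real.sqrt t := by
  have hs : 0 ≤ Real.sqrt t := Real.sqrt_nonneg t
  have h1 : (1:ℝ) + t ≤ (1 + Real.sqrt t)^2 := by
    have := Real.sq_sqrt ht
    nlinarith
  calc Real.log (1+t) ≤ Real.log ((1+Real.sqrt t)^2) :=
        Real.log_le_log (by linarith) h1
    _ = 2 * Real.log (1 + Real.sqrt t) := by
        rw [Real.log_pow]; push_cast; ring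
    _ ≤ 2 * Real.sqrt t := by have := log_le' hs; linarith

lemma G_nonneg {x y : ℝ × ℝ} (hx : x ∈ H) (hy : y ∈ H) : 0 ≤ G x y := by
  have hx2 : 0 < x.2 := hx
  have hy2 : 0 < y.2 := hy
  have h1 : 0 ≤ 4 * x.2 * y.2 / ((x.1 - y.1) ^ 2 + (x.2 - y.2) ^ 2) := by positivity
  have h2 : 0 ≤ Real.log (1 + 4 * x.2 * y.2 / ((x.1 - y.1) ^ 2 + (x.2 - y.2) ^ 2)) :=
    Real.log_nonneg (by linarith)
  have : (0:ℝ) < π := Real.pi_pos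
  rw [G]
  have h3 : (0:ℝ) ≤ 1 / (4 * π) := by positivity
  exact mul_nonneg h3 h2

lemma G_pointwise (x y : ℝ × ℝ) (hx : x ∈ H) (hy : y ∈ H) {δ ε : ℝ}
    (hδ : 0 < δ) (hε : 0 < ε) (w : ℝ) :
    G x y * |w| ≤ (1/(π*δ)) * (y.2 * |w|)
      + ((ε/(2*π)) * (if (y.1-x.1)^2+(y.2-x.2)^2 < δ^2
          then δ / Real.sqrt ((y.1-x.1)^2+(y.2-x.2)^2) else 0)
      + (1/(2*π*ε)) * w^2) := by
  have hx2 : 0 < x.2 := hx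
  have hy2 : 0 < y.2 := hy
  have hπ : (0:ℝ) < π := Real.pi_pos
  set D2 : ℝ := (x.1 - y.1) ^ 2 + (x.2 - y.2) ^ 2 with hD2
  have hD2' : (y.1-x.1)^2+(y.2-x.2)^2 = D2 := by rw [hD2]; ring
  rw [hD2']
  have hD2nn : 0 ≤ D2 := by positivity
  by_cases hD : D2 = 0
  · -- G x y = 0
    have hG : G x y = 0 := by
      rw [G, ← hD2, hD, div_zero, add_zero, Real.log_one, mul_zero]
    rw [hG, zero_mul]
    have hk : 0 ≤ (if D2 < δ^2 then δ / Real.sqrt D2 else 0) := by positivity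
    positivity
  · have hD2pos : 0 < D2 := lt_of_le_of_ne hD2nn (Ne.symm hD)
    set d : ℝ := Real.sqrt D2 with hd
    have hdpos : 0 < d := Real.sqrt_pos.mpr hD2pos
    have hdd : d^2 = D2 := Real.sq_sqrt hD2nn
    -- step 1 : G x y ≤ (1/(2π)) log (1 + 2 y₂ / d)
    have hxd : x.2 ≤ d + y.2 := by
      have h1 : (x.2 - y.2)^2 ≤ D2 := by nlinarith [sq_nonneg (x.1 - y.1)]
      have h2 : |x.2 - y.2| ≤ d := by
        rw [hd, ← Real.sqrt_sq_eq_abs]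
        exact Real.sqrt_le_sqrt h1
      have := abs_le.mp h2
      linarith [this.1]
    have harg : 1 + 4 * x.2 * y.2 / D2 ≤ ((d + 2*y.2)/d)^2 := by
      have h1 : 1 + 4 * x.2 * y.2 / D2 = (D2 + 4*x.2*y.2)/D2 := by
        field_simp
      have h2 : ((d + 2*y.2)/d)^2 = (d+2*y.2)^2/D2 := by
        rw [div_pow, hdd]
      rw [h1, h2]
      gcongr
      nlinarith [hxd, hy2, hdd, hdpos]
    have hlogstep : G x y ≤ (1/(2*π)) * Real.log (1 + 2*y.2/d) := by
      have hfrac : (d + 2*y.2)/d = 1 + 2*y.2/d := by field_simp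
      have hargpos : 0 < 1 + 4 * x.2 * y.2 / D2 := by positivity
      have hlog1 : Real.log (1 + 4 * x.2 * y.2 / D2) ≤ Real.log (((d + 2*y.2)/d)^2) :=
        Real.log_le_log hargpos harg
      have hlog2 : Real.log (((d + 2*y.2)/d)^2) = 2 * Real.log (1 + 2*y.2/d) := by
        rw [Real.log_pow, hfrac]; push_cast; ring
      rw [G, ← hD2]
      calc (1 / (4 * π)) * Real.log (1 + 4 * x.2 * y.2 / D2)
          ≤ (1 / (4 * π)) * (2 * Real.log (1 + 2*y.2/d)) := by
            rw [← hlog2]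
            exact mul_le_mul_of_nonneg_left hlog1 (by positivity)
        _ = (1/(2*π)) * Real.log (1 + 2*y.2/d) := by ring
    by_cases hnear : D2 < δ^2
    · -- near case
      have hdδ : d < δ := by
        rw [hd]
        exact (Real.sqrt_lt' hδ).mpr hnear
      rw [if_pos hnear]
      have hsplit : Real.log (1 + 2*y.2/d) ≤ 2*y.2/δ + 2 * Real.sqrt (δ/d) := by
        have hprod : 1 + 2*y.2/d ≤ (1 + 2*y.2/δ) * (1 + δ/d) := by
          have hexp : (1 + 2*y.2/δ) * (1 + δ/d) = 1 + 2*y.2/δ + δ/d + 2*y.2/d := by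
            field_simp
            ring
          rw [hexp]
          have h1 : 0 ≤ 2*y.2/δ := by positivity
          have h2 : 0 ≤ δ/d := by positivity
          linarith
        have h1 : 0 < 1 + 2*y.2/d := by positivity
        have h2 : 0 < 1 + 2*y.2/δ := by positivity
        have h3 : 0 < 1 + δ/d := by positivity
        calc Real.log (1 + 2*y.2/d) ≤ Real.log ((1 + 2*y.2/δ) * (1 + δ/d)) :=
              Real.log_le_log h1 hprod
          _ = Real.log (1 + 2*y.2/δ) + Real.log (1 + δ/d) :=
              Real.log_mul (ne_of_gt h2) (ne_of_gt h3)
          _ ≤ 2*y.2/δ + 2 * Real.sqrt (δ/d) := by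
              have := log_le' (show (0:ℝ) ≤ 2*y.2/δ by positivity)
              have := log_le_two_sqrt (show (0:ℝ) ≤ δ/d by positivity)
              linarith
      -- AM-GM : 2 √(δ/d) |w| ≤ ε (δ/d) + w²/ε
      have hamgm : 2 * Real.sqrt (δ/d) * |w| ≤ ε * (δ/d) + w^2/ε := by
        set a : ℝ := Real.sqrt (δ/d) with ha
        have ha2 : a^2 = δ/d := Real.sq_sqrt (by positivity)
        have key : ε * (2 * a * |w|) ≤ ε^2 * a^2 + w^2 := by
          nlinarith [sq_nonneg (ε*a - |w|), sq_abs w]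
        rw [← ha2]
        rw [← mul_le_mul_iff_right₀ hε]
        have : ε * (ε * a^2 + w^2/ε) = ε^2*a^2 + w^2 := by
          field_simp
        rw [this]
        exact key
      have hGle : G x y ≤ (1/(2*π)) * (2*y.2/δ + 2 * Real.sqrt (δ/d)) := by
        refine hlogstep.trans ?_
        exact mul_le_mul_of_nonneg_left hsplit (by positivity)
      have habs : 0 ≤ |w| := abs_nonneg w
      calc G x y * |w| ≤ ((1/(2*π)) * (2*y.2/δ + 2 * Real.sqrt (δ/d))) * |w| :=
            mul_le_mul_of_nonneg_right hGle habs
        _ = (1/(π*δ)) * (y.2 * |w|) + (1/(2*π)) * (2 * Real.sqrt (δ/d) * |w|) := by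
            ring
        _ ≤ (1/(π*δ)) * (y.2 * |w|) + (1/(2*π)) * (ε * (δ/d) + w^2/ε) :=
            add_le_add_right (mul_le_mul_of_nonneg_left hamgm (by positivity)) _
        _ = (1/(π*δ)) * (y.2 * |w|) + ((ε/(2*π)) * (δ / d) + (1/(2*π*ε)) * w^2) := by
            ring
    · -- far case
      rw [if_neg hnear]
      have hδd : δ ≤ d := by
        have : δ^2 ≤ D2 := le_of_not_gt hnear
        have := Real.sqrt_le_sqrt this
        rwa [Real.sqrt_sq hδ.le] at this
      have hfar : Real.log (1 + 2*y.2/d) ≤ 2*y.2/δ := by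
        have h1 : Real.log (1 + 2*y.2/d) ≤ 2*y.2/d := log_le' (by positivity)
        have h2 : 2*y.2/d ≤ 2*y.2/δ := by
          apply div_le_div_of_nonneg_left (by linarith) hδ hδd
        linarith
      have hGle : G x y ≤ (1/(π*δ)) * y.2 := by
        refine hlogstep.trans ?_
        calc (1/(2*π)) * Real.log (1 + 2*y.2/d) ≤ (1/(2*π)) * (2*y.2/δ) :=
              mul_le_mul_of_nonneg_left hfar (by positivity)
          _ = (1/(π*δ)) * y.2 := by ring
      have habs : 0 ≤ |w| := abs_nonneg w
      have h1 : G x y * |w| ≤ (1/(π*δ)) * y.2 * |w| :=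
        mul_le_mul_of_nonneg_right hGle habs
      have h2 : (0:ℝ) ≤ (1/(2*π*ε)) * w^2 := by positivity
      have h3 : (1/(π*δ)) * y.2 * |w| = (1/(π*δ)) * (y.2 * |w|) := by ring
      simp only [mul_zero, zero_add]
      exact (h3 ▸ h1).trans (le_add_of_nonneg_right h2)

lemma measurableSet_H : MeasurableSet H :=
  measurableSet_lt measurable_const measurable_snd

lemma key_est (ω : ℝ × ℝ → ℝ)
    (hω2 : Integrable (fun x => ω x ^ 2) (volume.restrict H))
    (hImp : Integrable (fun x : ℝ × ℝ => x.2 * |ω x|) (volume.restrict H))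
    {x : ℝ × ℝ} (hx : x ∈ H) {δ ε : ℝ} (hδ : 0 < δ) (hε : 0 < ε) :
    |Gpot ω x| ≤ impulse ω / (π * δ) + ε * δ^2 + (∫ y in H, ω y ^ 2) / (2 * π * ε) := by
  have hπ : (0:ℝ) < π := Real.pi_pos
  obtain ⟨hgInt, hgVal⟩ := ball_inv_spec hδ
  set g : ℝ × ℝ → ℝ :=
    fun z => if z.1^2+z.2^2 < δ^2 then δ / Real.sqrt (z.1^2+z.2^2) else 0 with hgdef
  set k : ℝ × ℝ → ℝ := fun y => g (y - x) with hkdef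
  have hkInt : Integrable k := hgInt.comp_sub_right x
  have hkVal : ∫ y, k y = 2*π*δ^2 := by
    rw [hkdef]
    rw [integral_sub_right_eq_self g x]
    exact hgVal
  have hknn : ∀ y, 0 ≤ k y := by
    intro y
    simp only [hkdef, hgdef]
    split <;> positivity
  have hkH : ∫ y in H, k y ≤ 2*π*δ^2 := by
    rw [← hkVal]
    exact setIntegral_le_integral hkInt (Filter.Eventually.of_forall hknn)
  set F : ℝ × ℝ → ℝ := fun y =>
    (1/(π*δ)) * (y.2 * |ω y|) + ((ε/(2*π)) * k y + (1/(2*π*ε)) * ω y ^ 2) with hFdef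
  have hint1 : Integrable (fun y : ℝ × ℝ => (1/(π*δ)) * (y.2 * |ω y|)) (volume.restrict H) :=
    hImp.const_mul _
  have hint2 : Integrable (fun y : ℝ × ℝ => (ε/(2*π)) * k y) (volume.restrict H) :=
    (hkInt.restrict).const_mul _
  have hint3 : Integrable (fun y : ℝ × ℝ => (1/(2*π*ε)) * ω y ^ 2) (volume.restrict H) :=
    hω2.const_mul _
  have hFInt : Integrable F (volume.restrict H) := hint1.add (hint2.add hint3)
  have hpt : ∀ y ∈ H, ‖G x y * ω y‖ ≤ F y := by
    intro y hy
    have hky : k y = (if (y.1-x.1)^2+(y.2-x.2)^2 < δ^2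
        then δ / Real.sqrt ((y.1-x.1)^2+(y.2-x.2)^2) else 0) := by
      simp only [hkdef, hgdef, Prod.fst_sub, Prod.snd_sub]
    have hbd := G_pointwise x y hx hy hδ hε (ω y)
    rw [Real.norm_eq_abs, abs_mul, abs_of_nonneg (G_nonneg hx hy)]
    simp only [hFdef, hky]
    exact hbd
  have h1 : |Gpot ω x| ≤ ∫ y in H, F y := by
    calc |Gpot ω x| = ‖∫ y in H, G x y * ω y‖ := (Real.norm_eq_abs _).symm
      _ ≤ ∫ y in H, ‖G x y * ω y‖ := norm_integral_le_integral_norm _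
      _ ≤ ∫ y in H, F y := by
          refine integral_mono_of_nonneg (Filter.Eventually.of_forall fun y => norm_nonneg _)
            hFInt ?_
          exact (ae_restrict_iff' measurableSet_H).mpr (Filter.Eventually.of_forall hpt)
  have h2 : ∫ y in H, F y = (1/(π*δ)) * impulse ω
      + ((ε/(2*π)) * ∫ y in H, k y) + (1/(2*π*ε)) * ∫ y in H, ω y ^ 2 := by
    rw [hFdef]
    have hint23 : Integrable (fun y : ℝ × ℝ =>
        (ε/(2*π)) * k y + (1/(2*π*ε)) * ω y ^ 2) (volume.restrict H) := hint2.add hint3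
    rw [integral_add hint1 hint23, integral_add hint2 hint3]
    rw [integral_const_mul, integral_const_mul, integral_const_mul]
    rw [impulse]
    ring
  have h3 : (ε/(2*π)) * ∫ y in H, k y ≤ ε * δ^2 := by
    calc (ε/(2*π)) * ∫ y in H, k y ≤ (ε/(2*π)) * (2*π*δ^2) :=
          mul_le_mul_of_nonneg_left hkH (by positivity)
      _ = ε * δ^2 := by field_simp
  have h4 : (1/(π*δ)) * impulse ω = impulse ω / (π*δ) := by ring
  have h5 : (1/(2*π*ε)) * ∫ y in H, ω y ^ 2 = (∫ y in H, ω y ^ 2) / (2*π*ε) := by ring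
  rw [h2, h4, h5] at h1
  linarith [h1, h3]

/-- uniform pointwise bound on the potential for `ω ∈ (L¹ ∩ L²)(ℝ²₊)`
with finite impulse. -/
theorem gpot_uniform_bound :
    ∃ C₂ : ℝ, 0 < C₂ ∧ ∀ ω : ℝ × ℝ → ℝ, MemL1L2 ω → ImpulseFinite ω → ∀ x ∈ H,
      |Gpot ω x| ≤
        C₂ * (norm1 ω ^ ((1 : ℝ) / 3) * norm2 ω ^ ((1 : ℝ) / 3) * impulse ω ^ ((1 : ℝ) / 3) +
          norm2 ω ^ ((1 : ℝ) / 2) * impulse ω ^ ((1 : ℝ) / 2)) := by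
  refine ⟨2, by norm_num, ?_⟩
  rintro ω ⟨hω1, hω2⟩ hImp x hx
  have hπ : (0:ℝ) < π := Real.pi_pos
  set Q : ℝ := ∫ y in H, ω y ^ 2 with hQdef
  set I : ℝ := impulse ω with hIdef
  have hQ0 : 0 ≤ Q := integral_nonneg fun y => sq_nonneg _
  have haeH : ∀ᵐ y ∂(volume.restrict H), y ∈ H := ae_restrict_mem measurableSet_H
  have hI0 : 0 ≤ I := by
    rw [hIdef, impulse]
    apply integral_nonneg_of_ae
    filter_upwards [haeH] with y hy
    exact mul_nonneg (le_of_lt hy) (abs_nonneg _)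
  have hn1 : 0 ≤ norm1 ω := integral_nonneg fun y => abs_nonneg _
  have hn2 : 0 ≤ norm2 ω := Real.rpow_nonneg hQ0 _
  have hT1 : 0 ≤ norm1 ω ^ ((1:ℝ)/3) * norm2 ω ^ ((1:ℝ)/3) * impulse ω ^ ((1:ℝ)/3) := by
    have := Real.rpow_nonneg hn1 ((1:ℝ)/3)
    have := Real.rpow_nonneg hn2 ((1:ℝ)/3)
    have := Real.rpow_nonneg hI0 ((1:ℝ)/3)
    rw [← hIdef]
    positivity
  have hT2 : 0 ≤ norm2 ω ^ ((1:ℝ)/2) * impulse ω ^ ((1:ℝ)/2) := by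
    have := Real.rpow_nonneg hn2 ((1:ℝ)/2)
    have := Real.rpow_nonneg hI0 ((1:ℝ)/2)
    rw [← hIdef]
    positivity
  have hnorm2 : norm2 ω ^ ((1:ℝ)/2) = Q ^ ((1:ℝ)/4) := by
    rw [norm2, ← hQdef, ← Real.rpow_mul hQ0]
    norm_num
  have hzero_case : (∀ᵐ y ∂(volume.restrict H), ω y = 0) → |Gpot ω x| ≤
      2 * (norm1 ω ^ ((1:ℝ)/3) * norm2 ω ^ ((1:ℝ)/3) * impulse ω ^ ((1:ℝ)/3) +
        norm2 ω ^ ((1:ℝ)/2) * impulse ω ^ ((1:ℝ)/2)) := by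
    intro hz
    have hGpot : Gpot ω x = 0 := by
      rw [Gpot]
      apply integral_eq_zero_of_ae
      filter_upwards [hz] with y hy
      simp [hy]
    rw [hGpot, abs_zero]
    linarith
  by_cases hQz : Q = 0
  · apply hzero_case
    have h0 : ∫ y in H, ω y ^ 2 = 0 := by rw [← hQdef]; exact hQz
    have hsq : (fun y => ω y ^ 2) =ᵐ[volume.restrict H] 0 :=
      (integral_eq_zero_iff_of_nonneg_ae (Filter.Eventually.of_forall fun y => sq_nonneg _)
        hω2).mp h0
    filter_upwards [hsq] with y hy
    have hy' : ω y ^ 2 = 0 := hy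
    exact pow_eq_zero_iff (by norm_num) |>.mp hy'
  by_cases hIz : I = 0
  · apply hzero_case
    have hv : (fun y : ℝ × ℝ => y.2 * |ω y|) =ᵐ[volume.restrict H] 0 := by
      refine (integral_eq_zero_iff_of_nonneg_ae ?_ hImp).mp ?_
      · filter_upwards [haeH] with y hy
        exact mul_nonneg (le_of_lt hy) (abs_nonneg _)
      · rw [← impulse, ← hIdef]; exact hIz
    filter_upwards [hv, haeH] with y hy hyH
    have hy2 : (0:ℝ) < y.2 := hyH
    have h0 : y.2 * |ω y| = 0 := hy
    have : |ω y| = 0 := by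
      rcases mul_eq_zero.mp h0 with h | h
      · exact absurd h (ne_of_gt hy2)
      · exact h
    exact abs_eq_zero.mp this
  -- main case
  have hQpos : 0 < Q := lt_of_le_of_ne hQ0 (Ne.symm hQz)
  have hIpos : 0 < I := lt_of_le_of_ne hI0 (Ne.symm hIz)
  set s : ℝ := I ^ ((1:ℝ)/2) with hsdef
  set q : ℝ := Q ^ ((1:ℝ)/4) with hqdef
  have hs : 0 < s := Real.rpow_pos_of_pos hIpos _
  have hq : 0 < q := Real.rpow_pos_of_pos hQpos _
  have hs2 : s ^ 2 = I := by
    rw [hsdef, ← Real.rpow_natCast (I ^ ((1:ℝ)/2)) 2, ← Real.rpow_mul hI0]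
    norm_num
  have hq4 : q ^ 4 = Q := by
    rw [hqdef, ← Real.rpow_natCast (Q ^ ((1:ℝ)/4)) 4, ← Real.rpow_mul hQ0]
    norm_num
  have hδ : (0:ℝ) < s / q := by positivity
  have hε : (0:ℝ) < q ^ 3 / s := by positivity
  have key := key_est ω hω2 hImp hx hδ hε
  rw [← hIdef, ← hQdef] at key
  have heq : I / (π * (s/q)) + (q^3/s) * (s/q)^2 + Q / (2 * π * (q^3/s))
      = s*q/π + s*q + s*q/(2*π) := by
    rw [← hs2, ← hq4]
    field_simp
  rw [heq] at key
  have hπ3 : (3:ℝ) ≤ π := by linarith [Real.pi_gt_three]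
  have hbd : s*q/π + s*q + s*q/(2*π) ≤ 2 * (s*q) := by
    have hsq : 0 < s*q := mul_pos hs hq
    have h1 : s*q/π ≤ s*q/3 := by
      apply div_le_div_of_nonneg_left hsq.le (by norm_num) hπ3
    have h2 : s*q/(2*π) ≤ s*q/6 := by
      apply div_le_div_of_nonneg_left hsq.le (by norm_num) (by linarith)
    linarith
  have hT2eq : norm2 ω ^ ((1:ℝ)/2) * impulse ω ^ ((1:ℝ)/2) = q * s := by
    rw [hnorm2, ← hIdef, ← hsdef]
  calc |Gpot ω x| ≤ 2 * (s * q) := key.trans hbd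
    _ ≤ 2 * (norm1 ω ^ ((1:ℝ)/3) * norm2 ω ^ ((1:ℝ)/3) * impulse ω ^ ((1:ℝ)/3) +
          norm2 ω ^ ((1:ℝ)/2) * impulse ω ^ ((1:ℝ)/2)) := by
        rw [hT2eq]
        nlinarith [hT1]
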